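/- arXiv:0812.1646 — 2 statements merged into one kernel-verified Lean document; each statement's English description precedes it below -/
import Mathlib

section
/- For 1 < p < 2 and all a, b ∈ ℝ^d with |a| + |b| > 0: (|a|^{p−2} a − |b|^{p−2} b) · (a − b) ≥ c_p |a − b|^2 / (|a| + |b|)^{2−p} for some constant c_p > 0. -/
open scoped RealInnerProductSpace

lemma my_rpow_shift {x q : ℝ} (hx : 0 ≤ x) (hq : q ≠ 0) : x ^ q = x ^ (q-1) * x := by
  rcases hx.eq_or_lt with h | hx'
  · simp [← h, Real.zero_rpow hq]
  · rw [← Real.rpow_add_one hx'.ne']; norm_num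

-- subadditivity of rpow for exponent in (0,1]
lemma my_rpow_subadd {x y q : ℝ} (hx : 0 ≤ x) (hy : 0 ≤ y) (hq0 : 0 < q) (hq1 : q ≤ 1) :
    (x + y) ^ q ≤ x ^ q + y ^ q := by
  rcases hx.eq_or_lt with h | hx
  · simp [← h, Real.zero_rpow hq0.ne']
  rcases hy.eq_or_lt with h | hy
  · simp [← h, Real.zero_rpow hq0.ne']
  have hxy : (0:ℝ) < x + y := by linarith
  have e : (x + y) ^ q = x * (x+y)^(q-1) + y * (x+y)^(q-1) := by
    rw [my_rpow_shift hxy.le hq0.ne']; ring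
  rw [e]
  have h1 : (x+y)^(q-1) ≤ x^(q-1) := Real.rpow_le_rpow_of_nonpos hx (by linarith) (by linarith)
  have h2 : (x+y)^(q-1) ≤ y^(q-1) := Real.rpow_le_rpow_of_nonpos hy (by linarith) (by linarith)
  calc x * (x+y)^(q-1) + y * (x+y)^(q-1) ≤ x * x^(q-1) + y * y^(q-1) := by gcongr
    _ = x^q + y^q := by rw [my_rpow_shift hx.le hq0.ne', my_rpow_shift hy.le hq0.ne']; ring

-- tangent line inequality for concave rpow
lemma my_tangent {x y q : ℝ} (hy : 0 ≤ y) (hxy : y ≤ x) (hx : 0 < x) (hq0 : 0 < q) (hq1 : q < 1) :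
    q * x ^ (q-1) * (x - y) ≤ x ^ q - y ^ q := by
  have hgm := Real.geom_mean_le_arith_mean2_weighted hq0.le (by linarith : (0:ℝ) ≤ 1 - q)
    (div_nonneg hy hx.le) zero_le_one (by ring)
  rw [Real.one_rpow, mul_one] at hgm
  -- (y/x)^q ≤ q*(y/x) + (1-q)
  have hA : (0:ℝ) < x ^ (q-1) := Real.rpow_pos_of_pos hx _
  have hyq : y ^ q = (y/x)^q * x^q := by
    rw [Real.div_rpow hy hx.le]; field_simp
  have hxq : x ^ q = x ^ (q-1) * x := my_rpow_shift hx.le hq0.ne'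
  have hdiv : (y/x) * x ^ q = y * x ^ (q-1) := by
    rw [hxq]; field_simp
  have hxqpos : (0:ℝ) < x ^ q := Real.rpow_pos_of_pos hx _
  have h2 : y ^ q ≤ q * (y * x^(q-1)) + (1-q) * x^q := by
    nlinarith [mul_le_mul_of_nonneg_right hgm hxqpos.le, hyq, hdiv]
  have h3 : x^q - (q*(y*x^(q-1)) + (1-q)*x^q) - q*x^(q-1)*(x-y) = 0 := by
    rw [hxq]; ring
  linarith

-- endpoint 2 identity/ineq, assuming y ≤ x
lemma my_E2' {p x y : ℝ} (hp1 : 1 < p) (hp2 : p < 2) (hy : 0 ≤ y) (hxy : y ≤ x)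
    (hpos : 0 < x + y) :
    (p-1) * (x-y)^2 ≤ (x^p + y^p - (x^(p-2)+y^(p-2))*(x*y)) * (x+y)^(2-p) := by
  have hx : 0 ≤ x := le_trans hy hxy
  have hid : x^p + y^p - (x^(p-2)+y^(p-2))*(x*y) = (x^(p-1) - y^(p-1)) * (x - y) := by
    have e1 : x ^ p = x^(p-1) * x := my_rpow_shift hx (by linarith)
    have e2 : y ^ p = y^(p-1) * y := my_rpow_shift hy (by linarith)
    have e3 : x ^ (p-1) = x^(p-2) * x := by
      have := my_rpow_shift hx (q := p-1) (by linarith)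
      simpa [show p - 1 - 1 = p - 2 by ring] using this
    have e4 : y ^ (p-1) = y^(p-2) * y := by
      have := my_rpow_shift hy (q := p-1) (by linarith)
      simpa [show p - 1 - 1 = p - 2 by ring] using this
    rw [e1, e2, e3, e4]; ring
  rw [hid]
  rcases hxy.eq_or_lt with h | hxy'
  · simp [h]
  have hx' : 0 < x := lt_of_le_of_lt hy hxy'
  have htan := my_tangent hy hxy hx' (by linarith : (0:ℝ) < p - 1) (by linarith : p - 1 < 1)
  have hS : (0:ℝ) < (x+y)^(2-p) := Real.rpow_pos_of_pos hpos _
  have hmono : (x+y)^(p-2) ≤ x^(p-2) :=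
    Real.rpow_le_rpow_of_nonpos hx' (by linarith) (by linarith)
  have hcancel : (x+y)^(p-2) * (x+y)^(2-p) = 1 := by
    rw [← Real.rpow_add hpos]; norm_num
  have h1 : (p-1) * x^(p-2) * (x-y) ≤ x^(p-1) - y^(p-1) := by
    simpa [show p - 1 - 1 = p - 2 by ring] using htan
  have key : (p-1) * (x-y) ≤ (x^(p-1) - y^(p-1)) * (x+y)^(2-p) := by
    calc (p-1) * (x-y) = (p-1) * (x-y) * ((x+y)^(p-2) * (x+y)^(2-p)) := by rw [hcancel]; ring
      _ ≤ (p-1) * (x-y) * (x^(p-2) * (x+y)^(2-p)) := by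
          have h2 := mul_le_mul_of_nonneg_right hmono hS.le
          have hnn : 0 ≤ (p-1)*(x-y) := by nlinarith
          exact mul_le_mul_of_nonneg_left h2 hnn
      _ = ((p-1) * x^(p-2) * (x-y)) * (x+y)^(2-p) := by ring
      _ ≤ (x^(p-1) - y^(p-1)) * (x+y)^(2-p) := mul_le_mul_of_nonneg_right h1 hS.le
  calc (p-1)*(x-y)^2 = ((p-1)*(x-y)) * (x-y) := by ring
    _ ≤ ((x^(p-1) - y^(p-1)) * (x+y)^(2-p)) * (x-y) :=
        mul_le_mul_of_nonneg_right key (by linarith)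
    _ = (x^(p-1) - y^(p-1)) * (x-y) * (x+y)^(2-p) := by ring

lemma my_E2 {p x y : ℝ} (hp1 : 1 < p) (hp2 : p < 2) (hx : 0 ≤ x) (hy : 0 ≤ y)
    (hpos : 0 < x + y) :
    (p-1) * (x-y)^2 ≤ (x^p + y^p - (x^(p-2)+y^(p-2))*(x*y)) * (x+y)^(2-p) := by
  rcases le_total y x with h | h
  · exact my_E2' hp1 hp2 hy h hpos
  · have := my_E2' hp1 hp2 hx h (by linarith)
    have e : (y-x)^2 = (x-y)^2 := by ring
    calc (p-1)*(x-y)^2 = (p-1)*(y-x)^2 := by ring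
      _ ≤ (y^p + x^p - (y^(p-2)+x^(p-2))*(y*x)) * (y+x)^(2-p) := this
      _ = (x^p + y^p - (x^(p-2)+y^(p-2))*(x*y)) * (x+y)^(2-p) := by ring_nf

lemma my_E1 {p x y : ℝ} (hp1 : 1 < p) (hp2 : p < 2) (hx : 0 ≤ x) (hy : 0 ≤ y)
    (hpos : 0 < x + y) :
    (p-1) * (x+y)^2 ≤ (x^p + y^p + (x^(p-2)+y^(p-2))*(x*y)) * (x+y)^(2-p) := by
  have hid : x^p + y^p + (x^(p-2)+y^(p-2))*(x*y) = (x^(p-1) + y^(p-1)) * (x + y) := by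
    have e1 : x ^ p = x^(p-1) * x := my_rpow_shift hx (by linarith)
    have e2 : y ^ p = y^(p-1) * y := my_rpow_shift hy (by linarith)
    have e3 : x ^ (p-1) = x^(p-2) * x := by
      have := my_rpow_shift hx (q := p-1) (by linarith)
      simpa [show p - 1 - 1 = p - 2 by ring] using this
    have e4 : y ^ (p-1) = y^(p-2) * y := by
      have := my_rpow_shift hy (q := p-1) (by linarith)
      simpa [show p - 1 - 1 = p - 2 by ring] using this
    rw [e1, e2, e3, e4]; ring
  rw [hid]
  have hsub : (x+y)^(p-1) ≤ x^(p-1) + y^(p-1) :=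
    my_rpow_subadd hx hy (by linarith) (by linarith)
  have hS : (0:ℝ) < (x+y)^(2-p) := Real.rpow_pos_of_pos hpos _
  have hcancel : (x+y)^(p-1) * (x+y) * (x+y)^(2-p) = (x+y)^2 := by
    rw [← Real.rpow_add_one hpos.ne', ← Real.rpow_add hpos, ← Real.rpow_two]
    norm_num
  calc (p-1) * (x+y)^2 ≤ 1 * (x+y)^2 := by nlinarith [sq_nonneg (x+y)]
    _ = (x+y)^(p-1) * (x+y) * (x+y)^(2-p) := by rw [hcancel]; ring
    _ ≤ (x^(p-1) + y^(p-1)) * (x+y) * (x+y)^(2-p) := by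
        have h1 : 0 ≤ (x+y) * (x+y)^(2-p) := by positivity
        calc (x+y)^(p-1) * (x+y) * (x+y)^(2-p) = (x+y)^(p-1) * ((x+y) * (x+y)^(2-p)) := by ring
          _ ≤ (x^(p-1) + y^(p-1)) * ((x+y) * (x+y)^(2-p)) := mul_le_mul_of_nonneg_right hsub h1
          _ = (x^(p-1) + y^(p-1)) * (x+y) * (x+y)^(2-p) := by ring

lemma my_key {p x y s : ℝ} (hp1 : 1 < p) (hp2 : p < 2) (hx : 0 ≤ x) (hy : 0 ≤ y)
    (hpos : 0 < x + y) (hs1 : -(x*y) ≤ s) (hs2 : s ≤ x*y) :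
    (p-1) * (x^2 + y^2 - 2*s) ≤ (x^p + y^p - (x^(p-2)+y^(p-2))*s) * (x+y)^(2-p) := by
  have hE1 := my_E1 hp1 hp2 hx hy hpos
  have hE2 := my_E2 hp1 hp2 hx hy hpos
  have hS : (0:ℝ) < (x+y)^(2-p) := Real.rpow_pos_of_pos hpos _
  set S := (x+y)^(2-p)
  set C := (x^(p-2)+y^(p-2)) * S with hC
  have hE1' : (p-1)*(x^2 + y^2 + 2*(x*y)) ≤ (x^p+y^p)*S + C*(x*y) := by nlinarith [hE1]
  have hE2' : (p-1)*(x^2 + y^2 - 2*(x*y)) ≤ (x^p+y^p)*S - C*(x*y) := by nlinarith [hE2]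
  have hgoal : (p-1)*(x^2+y^2-2*s) ≤ (x^p+y^p)*S - C*s := by
    rcases le_total (2*(p-1)) C with h | h
    · nlinarith [mul_nonneg (sub_nonneg.2 h) (sub_nonneg.2 hs2)]
    · nlinarith [mul_nonneg (sub_nonneg.2 h) (by linarith : (0:ℝ) ≤ s + x*y)]
  calc (p-1)*(x^2+y^2-2*s) ≤ (x^p+y^p)*S - C*s := hgoal
    _ = (x^p + y^p - (x^(p-2)+y^(p-2))*s) * S := by rw [hC]; ring

/-- for `1 < p < 2` there is `c_p > 0` such that for all `a, b ∈ ℝ^d`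
with `|a| + |b| > 0`,
`(|a|^{p−2} a − |b|^{p−2} b)·(a − b) ≥ c_p |a − b|² / (|a| + |b|)^{2−p}`. -/
theorem p_laplacian_monotone_p_lt_two (d : ℕ) (p : ℝ) (hp1 : 1 < p) (hp2 : p < 2) :
    ∃ c : ℝ, 0 < c ∧ ∀ a b : EuclideanSpace ℝ (Fin d), 0 < ‖a‖ + ‖b‖ →
      c * ‖a - b‖ ^ 2 / (‖a‖ + ‖b‖) ^ (2 - p)
        ≤ ⟪(‖a‖ ^ (p - 2)) • a - (‖b‖ ^ (p - 2)) • b, a - b⟫ := by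
  refine ⟨p - 1, by linarith, fun a b hab => ?_⟩
  set x := ‖a‖ with hxdef
  set y := ‖b‖ with hydef
  have hx : 0 ≤ x := norm_nonneg a
  have hy : 0 ≤ y := norm_nonneg b
  set s := ⟪a, b⟫ with hsdef
  have hsb : |s| ≤ x * y := abs_real_inner_le_norm a b
  have hs1 : -(x*y) ≤ s := neg_le_of_abs_le hsb
  have hs2 : s ≤ x*y := le_of_abs_le hsb
  have hinner : ⟪(x ^ (p - 2)) • a - (y ^ (p - 2)) • b, a - b⟫
      = x^(p-2) * (x^2 - s) + y^(p-2) * (y^2 - s) := by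
    simp only [inner_sub_left, inner_sub_right, real_inner_smul_left,
      real_inner_self_eq_norm_sq, ← hxdef, ← hydef]
    rw [real_inner_comm a b, ← hsdef]
    ring
  have hnorm : ‖a - b‖^2 = x^2 - 2*s + y^2 := by
    rw [norm_sub_sq_real]
  have hx2 : x^(p-2) * x^2 = x^p := by
    rcases hx.eq_or_lt with h | h
    · simp [← h, Real.zero_rpow (show p-2 ≠ 0 by linarith), Real.zero_rpow (show p ≠ 0 by linarith)]
    · rw [show (x:ℝ)^2 = x^((2:ℕ):ℝ) from (Real.rpow_natCast x 2).symm, ← Real.rpow_add h]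
      norm_num
  have hy2 : y^(p-2) * y^2 = y^p := by
    rcases hy.eq_or_lt with h | h
    · simp [← h, Real.zero_rpow (show p-2 ≠ 0 by linarith), Real.zero_rpow (show p ≠ 0 by linarith)]
    · rw [show (y:ℝ)^2 = y^((2:ℕ):ℝ) from (Real.rpow_natCast y 2).symm, ← Real.rpow_add h]
      norm_num
  rw [hinner, hnorm]
  have hS : (0:ℝ) < (x+y)^(2-p) := Real.rpow_pos_of_pos hab _
  rw [div_le_iff₀ hS]
  have key := my_key hp1 hp2 hx hy hab hs1 hs2
  calc (p-1) * (x^2 - 2*s + y^2) = (p-1) * (x^2 + y^2 - 2*s) := by ring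
    _ ≤ (x^p + y^p - (x^(p-2)+y^(p-2))*s) * (x+y)^(2-p) := key
    _ = (x^(p-2)*(x^2-s) + y^(p-2)*(y^2-s)) * (x+y)^(2-p) := by rw [← hx2, ← hy2]; ring
end

section
/- If a sequence of measurable functions χ_ν : Ω → {0,1} converges weakly-* in L^∞(Ω) to a function χ which is itself {0,1}-valued a.e., then χ_ν → χ strongly in L^s(Ω) for every 1 ≤ s < ∞. -/
open MeasureTheory Filter

/-- if indicator-valued functions `χ_ν` converge weakly-* in `L^∞` to a
`{0,1}`-valued function `χ`, then `χ_ν → χ` strongly in `L^s` for every `1 ≤ s < ∞`. -/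
theorem indicator_weak_star_to_strong {Ω : Type*} [MeasurableSpace Ω]
    (μ : Measure Ω) [IsFiniteMeasure μ]
    (χν : ℕ → Ω → ℝ) (χ : Ω → ℝ)
    (hmν : ∀ ν, Measurable (χν ν)) (hm : Measurable χ)
    (hvν : ∀ ν, ∀ᵐ x ∂μ, χν ν x = 0 ∨ χν ν x = 1)
    (hv : ∀ᵐ x ∂μ, χ x = 0 ∨ χ x = 1)
    (hweak : ∀ g : Ω → ℝ, Integrable g μ →
      Tendsto (fun ν => ∫ x, χν ν x * g x ∂μ) atTop (nhds (∫ x, χ x * g x ∂μ))) :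
    ∀ s : ℝ, 1 ≤ s →
      Tendsto (fun ν => ∫ x, |χν ν x - χ x| ^ s ∂μ) atTop (nhds 0) := by
  intro s hs
  have hs0 : s ≠ 0 := by linarith
  have hint : ∀ (f : Ω → ℝ), Measurable f → (∀ᵐ x ∂μ, f x = 0 ∨ f x = 1) →
      Integrable f μ := by
    intro f hf hvf
    refine Integrable.mono' (integrable_const (1 : ℝ)) hf.aestronglyMeasurable ?_
    filter_upwards [hvf] with x hx
    rcases hx with h | h <;> simp [h]
  have hχ : Integrable χ μ := hint χ hm hv
  have hχν : ∀ ν, Integrable (χν ν) μ := fun ν => hint _ (hmν ν) (hvν ν)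
  have hχνχ : ∀ ν, Integrable (fun x => χν ν x * χ x) μ := by
    intro ν
    refine Integrable.mono' (integrable_const (1 : ℝ))
      ((hmν ν).mul hm).aestronglyMeasurable ?_
    filter_upwards [hvν ν, hv] with x h1 h2
    rcases h1 with h1 | h1 <;> rcases h2 with h2 | h2 <;> simp [h1, h2]
  have key : ∀ ν, ∫ x, |χν ν x - χ x| ^ s ∂μ
      = ∫ x, χν ν x * 1 ∂μ - 2 * ∫ x, χν ν x * χ x ∂μ + ∫ x, χ x ∂μ := by
    intro ν
    have h1 : ∫ x, |χν ν x - χ x| ^ s ∂μ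
        = ∫ x, (χν ν x * 1 - 2 * (χν ν x * χ x) + χ x) ∂μ := by
      refine integral_congr_ae ?_
      filter_upwards [hvν ν, hv] with x h1 h2
      rcases h1 with h1 | h1 <;> rcases h2 with h2 | h2 <;>
        norm_num [h1, h2, Real.zero_rpow hs0, Real.one_rpow]
    have e1 : ∫ x, (χν ν x * 1 - 2 * (χν ν x * χ x) + χ x) ∂μ
        = ∫ x, (χν ν x * 1 - 2 * (χν ν x * χ x)) ∂μ + ∫ x, χ x ∂μ :=
      integral_add (((hχν ν).mul_const 1).sub ((hχνχ ν).const_mul 2)) hχ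
    have e2 : ∫ x, (χν ν x * 1 - 2 * (χν ν x * χ x)) ∂μ
        = ∫ x, χν ν x * 1 ∂μ - ∫ x, 2 * (χν ν x * χ x) ∂μ :=
      integral_sub ((hχν ν).mul_const 1) ((hχνχ ν).const_mul 2)
    have e3 : ∫ x, 2 * (χν ν x * χ x) ∂μ = 2 * ∫ x, χν ν x * χ x ∂μ :=
      MeasureTheory.integral_const_mul 2 _
    rw [h1, e1, e2, e3]
  have hlim1 : Tendsto (fun ν => ∫ x, χν ν x * 1 ∂μ) atTop
      (nhds (∫ x, χ x * 1 ∂μ)) := hweak (fun _ => 1) (integrable_const 1)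
  have hlim2 : Tendsto (fun ν => ∫ x, χν ν x * χ x ∂μ) atTop
      (nhds (∫ x, χ x * χ x ∂μ)) := hweak χ hχ
  have heq2 : ∫ x, χ x * χ x ∂μ = ∫ x, χ x ∂μ := by
    refine integral_congr_ae ?_
    filter_upwards [hv] with x h
    rcases h with h | h <;> simp [h]
  have hfinal : Tendsto (fun ν => ∫ x, χν ν x * 1 ∂μ - 2 * ∫ x, χν ν x * χ x ∂μ
      + ∫ x, χ x ∂μ) atTop
      (nhds (∫ x, χ x * 1 ∂μ - 2 * ∫ x, χ x * χ x ∂μ + ∫ x, χ x ∂μ)) :=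
    (hlim1.sub (hlim2.const_mul 2)).add tendsto_const_nhds
  have hzero : ∫ x, χ x * 1 ∂μ - 2 * ∫ x, χ x * χ x ∂μ + ∫ x, χ x ∂μ = 0 := by
    simp only [mul_one, heq2]; ring
  rw [show (0 : ℝ) = ∫ x, χ x * 1 ∂μ - 2 * ∫ x, χ x * χ x ∂μ + ∫ x, χ x ∂μ from
    hzero.symm]
  exact hfinal.congr fun ν => (key ν).symm
end
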